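/- For the simple symmetric random walk on ℤ² started at 0, for every n ≥ 0 one has P(S_{2n} = 0) = ( C(2n,n) · 2^{−2n} )², where C(2n,n) is the central binomial coefficient; moreover P(S_{2n+1} = 0) = 0. -/

import Mathlib

/-!
The rotation `(x, y) ↦ (x + y, x - y)` sends the four unit steps to `(±1, ±1)`, so the planar
walk becomes a pair of independent walks on `ℤ` with `±1` steps. Hence `4ⁿ P(S_n = (x, y))` is the
product of the numbers of `±1` paths of length `n` from `0` to `x + y` and to `x - y`, and the
number of such paths of length `2n` ending at `0` is `C(2n, n)`.
-/

/-- Step distribution of the simple symmetric random walk on `ℤ²`: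
uniform on the four unit vectors. -/
noncomputable def step (z : ℤ × ℤ) : ℝ :=
  if z = (1, 0) ∨ z = (-1, 0) ∨ z = (0, 1) ∨ z = (0, -1) then 1 / 4 else 0

/-- `q n x = P(S_n = x)` for the simple symmetric random walk on `ℤ²` started at `0`,
defined via the Chapman–Kolmogorov recursion. -/
noncomputable def q : ℕ → ℤ × ℤ → ℝ
  | 0 => fun z => if z = 0 then 1 else 0
  | n + 1 => fun z => ∑' y : ℤ × ℤ, q n y * step (z - y)

def walkCount : ℕ → ℤ → ℕ
  | 0, k => if k = 0 then 1 else 0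
  | n + 1, k => walkCount n (k - 1) + walkCount n (k + 1)

theorem walkCount_eq_zero_of_lt_natAbs {n : ℕ} {k : ℤ} (h : n < k.natAbs) :
    walkCount n k = 0 := by
  induction n generalizing k with
  | zero => simp only [walkCount, ite_eq_right_iff, one_ne_zero, imp_false]; omega
  | succ n ih => rw [walkCount, ih (by omega), ih (by omega)]

theorem walkCount_eq_zero_of_odd {n : ℕ} {k : ℤ} (h : Odd ((n : ℤ) + k)) :
    walkCount n k = 0 := by
  induction n generalizing k with
  | zero => simp [walkCount]; rintro rfl; simp at h
  | succ n ih =>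
    rw [Int.odd_iff] at h
    rw [walkCount, ih (by rw [Int.odd_iff]; omega), ih (by rw [Int.odd_iff]; omega)]

theorem walkCount_two_mul_sub (n m : ℕ) : walkCount n (2 * m - n) = n.choose m := by
  induction n generalizing m with
  | zero => cases m <;> simp [walkCount]; omega
  | succ n ih =>
    cases m with
    | zero =>
      rw [walkCount, walkCount_eq_zero_of_lt_natAbs (by omega), zero_add, Nat.choose_zero_right]
      convert ih 0 using 2 <;> simp
    | succ m =>
      rw [walkCount, Nat.choose_succ_succ, ← ih, ← ih]
      congr 2 <;> push_cast <;> ring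

theorem step_eq (e : ℤ × ℤ) :
    step e = if e ∈ ({(1, 0), (-1, 0), (0, 1), (0, -1)} : Finset (ℤ × ℤ)) then 1 / 4 else 0 := by
  simp [step]

theorem q_succ_eq_tsum (n : ℕ) (z : ℤ × ℤ) : q (n + 1) z = ∑' e, q n (z - e) * step e := by
  rw [q, ← (Equiv.subLeft z).tsum_eq]
  simp

theorem q_succ (n : ℕ) (x y : ℤ) :
    q (n + 1) (x, y) =
      (q n (x - 1, y) + q n (x + 1, y) + q n (x, y - 1) + q n (x, y + 1)) / 4 := by
  rw [q_succ_eq_tsum, tsum_eq_sum (s := {(1, 0), (-1, 0), (0, 1), (0, -1)})]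
  · simp [step_eq, Finset.sum_insert, sub_eq_add_neg]
    ring
  · intro e he
    rw [step_eq, if_neg he, mul_zero]

theorem q_eq_walkCount_mul_walkCount (n : ℕ) (x y : ℤ) :
    q n (x, y) = walkCount n (x + y) * walkCount n (x - y) / 4 ^ n := by
  induction n generalizing x y with
  | zero =>
    by_cases h : x = 0 ∧ y = 0
    · simp [q, walkCount, h]
    · have : x + y ≠ 0 ∨ x - y ≠ 0 := by omega
      rcases this with h' | h' <;> simp [q, walkCount, h', Prod.ext_iff] <;> omega
  | succ n ih =>
    rw [q_succ, ih, ih, ih, ih, walkCount, walkCount]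
    push_cast
    ring_nf

theorem two_zpow_neg_sq (n : ℕ) : ((2 : ℝ) ^ (-(2 * n : ℤ))) ^ 2 = 1 / 4 ^ (2 * n) := by
  rw [zpow_neg, inv_pow, one_div, ← zpow_natCast, ← zpow_mul, ← zpow_natCast]
  norm_num [zpow_mul, ← pow_mul, mul_comm]

/-- For the simple symmetric random walk on `ℤ²` started at `0`:
`P(S_{2n} = 0) = (C(2n,n) 2^{-2n})²` and `P(S_{2n+1} = 0) = 0`. -/
theorem ssrw_return_probability (n : ℕ) :
    q (2 * n) 0 = ((Nat.choose (2 * n) n : ℝ) * 2 ^ (-(2 * n : ℤ))) ^ 2 ∧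
    q (2 * n + 1) 0 = 0 := by
  have hcentral : walkCount (2 * n) 0 = (2 * n).choose n := by
    simpa using walkCount_two_mul_sub (2 * n) n
  have hodd : walkCount (2 * n + 1) 0 = 0 :=
    walkCount_eq_zero_of_odd (by simp)
  refine ⟨?_, ?_⟩
  · rw [Prod.zero_eq_mk, q_eq_walkCount_mul_walkCount, add_zero, sub_zero, hcentral, mul_pow,
      two_zpow_neg_sq]
    ring
  · rw [Prod.zero_eq_mk, q_eq_walkCount_mul_walkCount, add_zero, sub_zero, hodd]
    simp
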